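/- Let S be a numerical semigroup with m(S) − ν(S) ≥ 3. Then w_2 < f(S). -/

import Mathlib

/-- A numerical semigroup: an additive submonoid of `ℕ` (containing `0`, closed under
addition) whose complement in `ℕ` is finite. -/
structure NumericalSemigroup where
  carrier : Set ℕ
  zero_mem : 0 ∈ carrier
  add_mem : ∀ ⦃a b : ℕ⦄, a ∈ carrier → b ∈ carrier → a + b ∈ carrier
  cofinite : (carrierᶜ : Set ℕ).Finite

namespace NumericalSemigroup

/-- The multiplicity `m(S)`: the smallest positive element of `S`. -/
noncomputable def mult (S : NumericalSemigroup) : ℕ :=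
  sInf {s : ℕ | s ∈ S.carrier ∧ 0 < s}

/-- The embedding dimension `ν(S)`: the cardinality of the (unique) minimal system of
generators of `S`, i.e. the least cardinality of a generating set. -/
noncomputable def embdim (S : NumericalSemigroup) : ℕ :=
  sInf {n : ℕ | ∃ G : Finset ℕ,
    S.carrier = (AddSubmonoid.closure (G : Set ℕ) : Set ℕ) ∧ G.card = n}

/-- The Frobenius number `f(S)`: the largest integer not belonging to `S`. -/
noncomputable def frob (S : NumericalSemigroup) : ℤ :=
  sSup {x : ℤ | ∀ s ∈ S.carrier, (s : ℤ) ≠ x}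

/-- `n(S)`: the number of elements of `S` smaller than the Frobenius number. -/
noncomputable def small (S : NumericalSemigroup) : ℕ :=
  {s : ℕ | s ∈ S.carrier ∧ (s : ℤ) < S.frob}.ncard

/-- The type `t(S)`: the number of pseudo-Frobenius numbers of `S`, i.e. integers
`x ∉ S` such that `x + s ∈ S` for every nonzero `s ∈ S`. -/
noncomputable def typ (S : NumericalSemigroup) : ℕ :=
  {x : ℤ | (∀ s ∈ S.carrier, (s : ℤ) ≠ x) ∧
    ∀ s ∈ S.carrier, 0 < s → ∃ u ∈ S.carrier, (u : ℤ) = x + s}.ncard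

/-- The `k`-th interval `I_k = [k·m, (k+1)·m - 1]` (for a given `m`). -/
def interval (m k : ℕ) : Set ℕ := Set.Ico (k * m) ((k + 1) * m)

/-- `n_k`: the number of elements of `S ∩ I_k` smaller than the Frobenius number. -/
noncomputable def nk (S : NumericalSemigroup) (k : ℕ) : ℕ :=
  {s : ℕ | s ∈ S.carrier ∩ interval S.mult k ∧ (s : ℤ) < S.frob}.ncard

/-- `L = ⌊f(S)/m(S)⌋`. -/
noncomputable def Lindex (S : NumericalSemigroup) : ℤ := S.frob / (S.mult : ℤ)

/-- `ρ = f(S) + 1 - L·m(S)`. -/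
noncomputable def rho (S : NumericalSemigroup) : ℤ :=
  S.frob + 1 - S.Lindex * (S.mult : ℤ)

/-- The Apéry set `Ap(S) = {w ∈ S : w - m(S) ∉ S}`. -/
def apery (S : NumericalSemigroup) : Set ℕ :=
  {w : ℕ | w ∈ S.carrier ∧ ∀ u ∈ S.carrier, u + S.mult ≠ w}

theorem apery_finite (S : NumericalSemigroup) : S.apery.Finite := by
  apply Set.Finite.subset ((Set.finite_Iio S.mult).union (S.cofinite.image (· + S.mult)))
  intro x hx
  by_cases h : x < S.mult
  · exact Or.inl h
  · refine Or.inr ⟨x - S.mult, fun hmem => hx.2 _ hmem (by omega), ?_⟩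
    show x - S.mult + S.mult = x
    omega

/-- `w j`: the `(j+1)`-st smallest element of the Apéry set, so that
`Ap(S) = {w 0 < w 1 < ... < w (m-1)}` with `w 0 = 0`. -/
noncomputable def w (S : NumericalSemigroup) (j : ℕ) : ℕ :=
  (S.apery_finite.toFinset.sort (· ≤ ·)).getD j 0

/-- `ε_j`: the number of `k ∈ {0, ..., L-1}` such that `|I_k ∩ S| = j`. -/
noncomputable def eps (S : NumericalSemigroup) (j : ℕ) : ℕ :=
  {k : ℕ | (k : ℤ) < S.Lindex ∧ (S.carrier ∩ interval S.mult k).ncard = j}.ncard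

/-- `η_j`: the number of `k ∈ ℕ` such that `|I_k ∩ S| = j`. -/
noncomputable def eta (S : NumericalSemigroup) (j : ℕ) : ℕ :=
  {k : ℕ | (S.carrier ∩ interval S.mult k).ncard = j}.ncard

/-! Every Apéry element other than `0` that is not a minimal generator is the sum of two nonzero
Apéry elements. A minimal generating system has only `ν` elements while `Ap(S)` has `m`, so
`m - ν ≥ 3` leaves an Apéry element `c` that is neither `0`, a generator, nor `2 w₁`. Writing
`c = u + v` with `u, v` nonzero Apéry elements not both equal to `w₁` gives
`c ≥ w₁ + w₂ > m + w₂`, and `c - m ∉ S` then forces `f(S) ≥ c - m > w₂`. -/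

theorem _root_.AddSubmonoid.eq_zero_or_exists_add_of_mem_closure {M : Type*} [AddMonoid M]
    {s : Set M} {x : M} (hx : x ∈ AddSubmonoid.closure s) :
    x = 0 ∨ ∃ g ∈ s, ∃ y ∈ AddSubmonoid.closure s, x = g + y := by
  induction hx using AddSubmonoid.closure_induction_left with
  | zero => exact .inl rfl
  | add_left g hg y hy _ => exact .inr ⟨g, hg, y, hy, rfl⟩

variable (S : NumericalSemigroup)

def toAddSubmonoid : AddSubmonoid ℕ where
  carrier := S.carrier
  add_mem' := fun ha hb => S.add_mem ha hb
  zero_mem' := S.zero_mem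

lemma exists_forall_le_mem : ∃ B : ℕ, ∀ x, B ≤ x → x ∈ S.carrier := by
  obtain ⟨B, hB⟩ := S.cofinite.bddAbove
  refine ⟨B + 1, fun x hx => ?_⟩
  by_contra hxS
  have := hB hxS
  omega

lemma le_frob_of_notMem {n : ℕ} (hn : n ∉ S.carrier) : (n : ℤ) ≤ S.frob := by
  obtain ⟨B, hB⟩ := S.exists_forall_le_mem
  refine le_csSup ⟨B, fun x hx => ?_⟩ fun s hs hsn => hn (Nat.cast_injective hsn ▸ hs)
  by_contra! hBx
  lift x to ℕ using by omega
  exact hx x (hB x (by exact_mod_cast hBx.le)) rfl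

lemma mult_mem_and_pos : S.mult ∈ S.carrier ∧ 0 < S.mult := by
  obtain ⟨B, hB⟩ := S.exists_forall_le_mem
  exact Nat.sInf_mem (s := {s | s ∈ S.carrier ∧ 0 < s}) ⟨B + 1, hB _ B.le_succ, B.succ_pos⟩

lemma mult_pos : 0 < S.mult := S.mult_mem_and_pos.2

lemma mult_le_of_mem {x : ℕ} (hx : x ∈ S.carrier) (hx0 : 0 < x) : S.mult ≤ x :=
  Nat.sInf_le ⟨hx, hx0⟩

section Apery

variable {S}

lemma zero_mem_apery : 0 ∈ S.apery :=
  ⟨S.zero_mem, fun _ _ h => S.mult_pos.ne' (by omega)⟩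

lemma mult_notMem_apery : S.mult ∉ S.apery :=
  fun h => h.2 0 S.zero_mem (zero_add _)

lemma mult_lt_of_mem_apery {x : ℕ} (hx : x ∈ S.apery) (hx0 : x ≠ 0) : S.mult < x :=
  (S.mult_le_of_mem hx.1 (Nat.pos_of_ne_zero hx0)).lt_of_ne
    fun h => mult_notMem_apery (h ▸ hx)

lemma sub_mult_notMem_of_mem_apery {x : ℕ} (hx : x ∈ S.apery) (hm : S.mult ≤ x) :
    x - S.mult ∉ S.carrier :=
  fun h => hx.2 _ h (Nat.sub_add_cancel hm)

lemma mem_apery_of_add_mem_apery {u v : ℕ} (hu : u ∈ S.carrier) (hv : v ∈ S.carrier)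
    (huv : u + v ∈ S.apery) : u ∈ S.apery :=
  ⟨hu, fun t ht h => huv.2 (t + v) (S.add_mem ht hv) (by omega)⟩

end Apery

lemma exists_mem_apery_mod_eq {r : ℕ} (hr : r < S.mult) : ∃ x ∈ S.apery, x % S.mult = r := by
  obtain ⟨B, hB⟩ := S.exists_forall_le_mem
  have hne : {x | x ∈ S.carrier ∧ x % S.mult = r}.Nonempty :=
    ⟨B * S.mult + r, hB _ (by nlinarith [S.mult_pos]), by simp [Nat.mod_eq_of_lt hr]⟩
  obtain ⟨hxS, hxr⟩ := Nat.sInf_mem hne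
  refine ⟨_, ⟨hxS, fun u hu hux => ?_⟩, hxr⟩
  have : sInf _ ≤ u :=
    Nat.sInf_le (show u ∈ {x | x ∈ S.carrier ∧ x % S.mult = r} from
      ⟨hu, by rw [← hxr, ← hux, Nat.add_mod_right]⟩)
  have := S.mult_pos
  omega

lemma mult_le_card_apery : S.mult ≤ S.apery_finite.toFinset.card :=
  calc S.mult = (Finset.range S.mult).card := (Finset.card_range _).symm
    _ ≤ (S.apery_finite.toFinset.image (· % S.mult)).card := Finset.card_le_card fun r hr => by
      obtain ⟨x, hx, hxr⟩ := S.exists_mem_apery_mod_eq (Finset.mem_range.mp hr)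
      exact Finset.mem_image.mpr ⟨x, S.apery_finite.mem_toFinset.mpr hx, hxr⟩
    _ ≤ S.apery_finite.toFinset.card := Finset.card_image_le

lemma carrier_eq_closure_insert_mult_apery :
    S.carrier = AddSubmonoid.closure (insert S.mult S.apery) := by
  refine subset_antisymm (fun x hx => ?_) ?_
  · induction x using Nat.strong_induction_on with
    | _ x ih =>
      by_cases hxAp : x ∈ S.apery
      · exact AddSubmonoid.subset_closure (Set.mem_insert_of_mem _ hxAp)
      · obtain ⟨u, hu, rfl⟩ : ∃ u ∈ S.carrier, u + S.mult = x := by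
          by_contra! h
          exact hxAp ⟨hx, h⟩
        exact AddSubmonoid.add_mem _ (ih u (by linarith [S.mult_pos]) hu)
          (AddSubmonoid.subset_closure (Set.mem_insert _ _))
  · exact (AddSubmonoid.closure_le (S := S.toAddSubmonoid)).mpr <|
      Set.insert_subset S.mult_mem_and_pos.1 fun _ hx => hx.1

lemma exists_finset_closure_eq_card_eq_embdim : ∃ G : Finset ℕ,
    S.carrier = (AddSubmonoid.closure (G : Set ℕ) : Set ℕ) ∧ G.card = S.embdim :=
  Nat.sInf_mem (s := {n | ∃ G : Finset ℕ,
      S.carrier = (AddSubmonoid.closure (G : Set ℕ) : Set ℕ) ∧ G.card = n})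
    ⟨_, insert S.mult S.apery_finite.toFinset,
      by simpa using S.carrier_eq_closure_insert_mult_apery, rfl⟩

lemma zero_notMem_of_card_eq_embdim {G : Finset ℕ}
    (hG : S.carrier = AddSubmonoid.closure (G : Set ℕ)) (hcard : G.card = S.embdim) :
    0 ∉ G := by
  intro h0
  have hclosure :
      AddSubmonoid.closure (G : Set ℕ) = AddSubmonoid.closure (G.erase 0 : Set ℕ) := by
    conv_lhs => rw [← Finset.insert_erase h0, Finset.coe_insert, AddSubmonoid.closure_insert_zero]
  have : S.embdim ≤ (G.erase 0).card := Nat.sInf_le ⟨G.erase 0, hclosure ▸ hG, rfl⟩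
  rw [Finset.card_erase_of_mem h0] at this
  have := Finset.card_pos.mpr ⟨0, h0⟩
  omega

lemma exists_add_eq_of_mem_apery {s : Set ℕ} (hs : S.carrier = AddSubmonoid.closure s)
    (hs0 : 0 ∉ s) {x : ℕ} (hx : x ∈ S.apery) (hx0 : x ≠ 0) (hxs : x ∉ s) :
    ∃ u ∈ S.apery, ∃ v ∈ S.apery, u ≠ 0 ∧ v ≠ 0 ∧ x = u + v := by
  obtain rfl | ⟨g, hg, y, hy, rfl⟩ :=
    AddSubmonoid.eq_zero_or_exists_add_of_mem_closure (hs.subset hx.1)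
  · exact absurd rfl hx0
  have hgS : g ∈ S.carrier := hs.symm.subset (AddSubmonoid.subset_closure hg)
  have hyS : y ∈ S.carrier := hs.symm.subset hy
  refine ⟨g, mem_apery_of_add_mem_apery hgS hyS hx, y,
    mem_apery_of_add_mem_apery hyS hgS (add_comm g y ▸ hx), ?_, ?_, rfl⟩
  · rintro rfl
    exact hs0 hg
  · rintro rfl
    exact hxs hg

section SortedApery

variable {S}

lemma w_eq_getElem {j : ℕ} (hj : j < S.apery_finite.toFinset.card) :
    S.w j = (S.apery_finite.toFinset.sort (· ≤ ·))[j]'(by rwa [Finset.length_sort]) :=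
  List.getD_eq_getElem _ _ _

lemma w_mem_apery {j : ℕ} (hj : j < S.apery_finite.toFinset.card) : S.w j ∈ S.apery := by
  rw [w_eq_getElem hj, ← S.apery_finite.mem_toFinset, ← Finset.mem_sort (· ≤ ·)]
  exact List.getElem_mem _

lemma w_lt_w {i j : ℕ} (hij : i < j) (hj : j < S.apery_finite.toFinset.card) :
    S.w i < S.w j := by
  rw [w_eq_getElem (hij.trans hj), w_eq_getElem hj]
  exact (Finset.sortedLT_sort _).strictMono_get (show (⟨i, _⟩ : Fin _) < ⟨j, _⟩ from hij)

lemma exists_w_eq {x : ℕ} (hx : x ∈ S.apery) :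
    ∃ j < S.apery_finite.toFinset.card, S.w j = x := by
  rw [← S.apery_finite.mem_toFinset, ← Finset.mem_sort (· ≤ ·), List.mem_iff_getElem] at hx
  obtain ⟨j, hj, rfl⟩ := hx
  rw [Finset.length_sort] at hj
  exact ⟨j, hj, w_eq_getElem hj⟩

lemma w_le_of_mem_apery {j x : ℕ} (hx : x ∈ S.apery) (hne : ∀ i < j, x ≠ S.w i) :
    S.w j ≤ x := by
  obtain ⟨k, hk, rfl⟩ := exists_w_eq hx
  obtain hjk | rfl | hkj := lt_trichotomy j k
  · exact (w_lt_w hjk hk).le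
  · rfl
  · exact absurd rfl (hne k hkj)

lemma w_zero : S.w 0 = 0 :=
  Nat.le_zero.mp <| w_le_of_mem_apery zero_mem_apery (by simp)

lemma w_one_le {x : ℕ} (hx : x ∈ S.apery) (hx0 : x ≠ 0) : S.w 1 ≤ x :=
  w_le_of_mem_apery hx fun i hi => by
    obtain rfl : i = 0 := by omega
    rwa [w_zero]

lemma w_two_le {x : ℕ} (hx : x ∈ S.apery) (hx0 : x ≠ 0) (hx1 : x ≠ S.w 1) : S.w 2 ≤ x :=
  w_le_of_mem_apery hx fun i hi => by
    interval_cases i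
    · rwa [w_zero]
    · exact hx1

lemma mult_lt_w_one (h1 : 1 < S.apery_finite.toFinset.card) : S.mult < S.w 1 :=
  mult_lt_of_mem_apery (w_mem_apery h1) (w_zero (S := S) ▸ w_lt_w one_pos h1).ne'

lemma w_one_add_w_two_le {u v : ℕ} (hu : u ∈ S.apery) (hv : v ∈ S.apery) (hu0 : u ≠ 0)
    (hv0 : v ≠ 0) (huv : u + v ≠ 2 * S.w 1) : S.w 1 + S.w 2 ≤ u + v := by
  have hu1 := w_one_le hu hu0
  have hv1 := w_one_le hv hv0
  by_cases hu1' : u = S.w 1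
  · have := w_two_le hv hv0 (by omega)
    omega
  · have := w_two_le hu hu0 hu1'
    omega

end SortedApery

/-- If `m(S) - ν(S) ≥ 3` then `w_2 < f(S)`. -/
theorem w_two_lt_frob (S : NumericalSemigroup)
    (h : 3 ≤ S.mult - S.embdim) :
    (S.w 2 : ℤ) < S.frob := by
  obtain ⟨G, hG, hcard⟩ := S.exists_finset_closure_eq_card_eq_embdim
  have hG0 := S.zero_notMem_of_card_eq_embdim hG hcard
  have hm := S.mult_le_card_apery
  obtain ⟨c, hc⟩ : (S.apery_finite.toFinset \ insert 0 (insert (2 * S.w 1) G)).Nonempty := by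
    rw [← Finset.card_pos]
    have := Finset.le_card_sdiff (insert 0 (insert (2 * S.w 1) G)) S.apery_finite.toFinset
    have := Finset.card_insert_le 0 (insert (2 * S.w 1) G)
    have := Finset.card_insert_le (2 * S.w 1) G
    omega
  simp only [Finset.mem_sdiff, Finset.mem_insert, not_or, Set.Finite.mem_toFinset] at hc
  obtain ⟨hcAp, hc0, hcw, hcG⟩ := hc
  obtain ⟨u, hu, v, hv, hu0, hv0, rfl⟩ := S.exists_add_eq_of_mem_apery hG hG0 hcAp hc0 hcG
  have hw := w_one_add_w_two_le hu hv hu0 hv0 hcw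
  have hmw := S.mult_lt_w_one (by omega)
  calc (S.w 2 : ℤ) < (u + v - S.mult : ℕ) := by omega
    _ ≤ S.frob := S.le_frob_of_notMem (sub_mult_notMem_of_mem_apery hcAp (by omega))

end NumericalSemigroup
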